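/- Let ({x̂_k},{f̂_k}) ∈ 𝒩 be a minimizer of J_y over 𝒩 with minimal value Ĵ = J_y({f̂_k},{x̂_k}) ≤ 1, and let {ℓ_k}_{k=0}^{N+1} ∈ L. Then the support function of the a-posteriori set satisfies sup_{{x_k}∈G_y} ℓ({x_k}) = Σ_{k=0}^{N+1} (ℓ_k, x̂_k) + sup{ ℓ({x_k}) : ({x_k},{f_k}) ∈ 𝒩, J_0({f_k},{x_k}) ≤ 1 − Ĵ }. -/

import Mathlib

open Matrix

/-!  Index conventions.  The state sequence `x_0,…,x_{N+1}` is a function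
`Fin (N+2) → Fin n → ℝ`.  The disturbance sequence `f_{-1},…,f_N` and the
data `B_{-1},…,B_N`, `Q_{-1},…,Q_N` are shifted by one, so `f j`, `B j`,
`Q j` (for `j : Fin (N+2)`) stand for `f_{j-1}`, `B_{j-1}`, `Q_{j-1}`. -/

/-- The constraint set `𝒩` of pairs `({x_k}_{0}^{N+1}, {f_k}_{-1}^{N})` with
`F_{k+1} x_{k+1} - C_k x_k = B_k f_k` (k = 0,…,N) and `F_0 x_0 = B_{-1} f_{-1}`. -/
def NSet {N m n p : ℕ} (F : Fin (N + 2) → Matrix (Fin m) (Fin n) ℝ)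
    (C : Fin (N + 1) → Matrix (Fin m) (Fin n) ℝ)
    (B : Fin (N + 2) → Matrix (Fin m) (Fin p) ℝ) :
    Set ((Fin (N + 2) → Fin n → ℝ) × (Fin (N + 2) → Fin p → ℝ)) :=
  {xf | (∀ k : Fin (N + 1),
      F k.succ *ᵥ xf.1 k.succ - C k *ᵥ xf.1 k.castSucc = B k.succ *ᵥ xf.2 k.succ) ∧
    F 0 *ᵥ xf.1 0 = B 0 *ᵥ xf.2 0}

/-- The functional
`J_y({f},{x}) = Σ_{k=-1}^{N} (Q_k f_k, f_k) + Σ_{k=0}^{N} (R_k(y_k - H_k x_k), y_k - H_k x_k)`. -/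
def Jfun {N n p q : ℕ} (H : Fin (N + 1) → Matrix (Fin q) (Fin n) ℝ)
    (Q : Fin (N + 2) → Matrix (Fin p) (Fin p) ℝ)
    (R : Fin (N + 1) → Matrix (Fin q) (Fin q) ℝ)
    (y : Fin (N + 1) → Fin q → ℝ)
    (f : Fin (N + 2) → Fin p → ℝ) (x : Fin (N + 2) → Fin n → ℝ) : ℝ :=
  (∑ j : Fin (N + 2), (Q j *ᵥ f j) ⬝ᵥ f j) +
    ∑ k : Fin (N + 1),
      (R k *ᵥ (y k - H k *ᵥ x k.castSucc)) ⬝ᵥ (y k - H k *ᵥ x k.castSucc)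

/-- The a-posteriori set `G_y`. -/
def GSet {N m n p q : ℕ} (F : Fin (N + 2) → Matrix (Fin m) (Fin n) ℝ)
    (C : Fin (N + 1) → Matrix (Fin m) (Fin n) ℝ)
    (H : Fin (N + 1) → Matrix (Fin q) (Fin n) ℝ)
    (B : Fin (N + 2) → Matrix (Fin m) (Fin p) ℝ)
    (Q : Fin (N + 2) → Matrix (Fin p) (Fin p) ℝ)
    (R : Fin (N + 1) → Matrix (Fin q) (Fin q) ℝ)
    (y : Fin (N + 1) → Fin q → ℝ) : Set (Fin (N + 2) → Fin n → ℝ) :=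
  {x | ∃ f, (x, f) ∈ NSet F C B ∧ Jfun H Q R y f x ≤ 1}

/-- `ℓ({x_k}) = Σ_{k=0}^{N+1} (ℓ_k, x_k)`. -/
def lfun {N n : ℕ} (l : Fin (N + 2) → Fin n → ℝ) (x : Fin (N + 2) → Fin n → ℝ) : ℝ :=
  ∑ k : Fin (N + 2), l k ⬝ᵥ x k

/-- Membership of the family `{ℓ_k}_{0}^{N+1}` in the set `L`: there are
`z_k ∈ ℝ^m` and `u_k ∈ ℝ^q` with `ℓ_k = F_k' z_k - C_k' z_{k+1} + H_k' u_k`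
(k = 0,…,N) and `F_{N+1}' z_{N+1} = ℓ_{N+1}`. -/
def memL {N m n q : ℕ} (F : Fin (N + 2) → Matrix (Fin m) (Fin n) ℝ)
    (C : Fin (N + 1) → Matrix (Fin m) (Fin n) ℝ)
    (H : Fin (N + 1) → Matrix (Fin q) (Fin n) ℝ)
    (l : Fin (N + 2) → Fin n → ℝ) : Prop :=
  ∃ (z : Fin (N + 2) → Fin m → ℝ) (u : Fin (N + 1) → Fin q → ℝ),
    (∀ k : Fin (N + 1),
      l k.castSucc =
        (F k.castSucc)ᵀ *ᵥ z k.castSucc - (C k)ᵀ *ᵥ z k.succ + (H k)ᵀ *ᵥ u k) ∧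
    (F (Fin.last (N + 1)))ᵀ *ᵥ z (Fin.last (N + 1)) = l (Fin.last (N + 1))

/-- `lhat` is a minimax a-posteriori estimation of the linear function `lf` over `G`:
`sup_{x ∈ G} |lf x - lhat| = inf_{x̃ ∈ G} sup_{x ∈ G} |lf x - lf x̃|`
(suprema and infima taken in the extended reals). -/
def IsMinimaxEstimate {N n : ℕ} (G : Set (Fin (N + 2) → Fin n → ℝ))
    (lf : (Fin (N + 2) → Fin n → ℝ) → ℝ) (lhat : ℝ) : Prop :=
  (⨆ x ∈ G, (↑|lf x - lhat| : EReal)) =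
    ⨅ xt ∈ G, ⨆ x ∈ G, (↑|lf x - lf xt| : EReal)

/-! Write `J_y(f, x)` as `Φ((0, y) + A(x, f))` for the quadratic form
`Φ(g, r) = Σ (Q g, g) + Σ (R r, r)` and the linear map `A(x, f) = (f, -H x)`. Since `𝒩` is a linear space and `(x̂, f̂)` minimizes `J_y` on it,
the first variation of `Φ` at `(0, y) + A(x̂, f̂)` vanishes in the directions `A 𝒩`, which gives the
Pythagoras identity `J_y(f̂ + g, x̂ + w) = Ĵ + J_0(g, w)` for `(w, g) ∈ 𝒩`. Hence `G_y` is the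
translate by `x̂` of `{x : (x, f) ∈ 𝒩, J_0(f, x) ≤ 1 - Ĵ}`, and its support function is shifted by
`ℓ(x̂)`. The supremum on the right is finite because `ℓ ∈ L`: summing by parts along the
constraints of `𝒩` turns `ℓ(x)` into `Σ (B' z, f) + Σ (u, H x)`, and
`2 (v, g) ≤ (Q⁻¹ v, v) + (Q g, g)` bounds `2 ℓ(x)` by a constant plus `J_0(f, x)`. -/

namespace QuadraticMap

variable {K E : Type*} [Field K] [LinearOrder K] [IsStrictOrderedRing K]
  [AddCommGroup E] [Module K E]

theorem map_add_eq_of_forall_le_map_add_smul (Φ : QuadraticMap K E K) {e₀ w : E}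
    (hmin : ∀ t : K, Φ e₀ ≤ Φ (e₀ + t • w)) : Φ (e₀ + w) = Φ e₀ + Φ w := by
  have hexpand (t : K) : Φ (e₀ + t • w) = Φ e₀ + polar Φ e₀ w * t + Φ w * (t * t) := by
    have hpolar := Φ.polar_smul_right t e₀ w
    have hsmul := Φ.map_smul t w
    simp only [polar, smul_eq_mul] at hpolar hsmul ⊢
    linear_combination hpolar + hsmul
  -- `t ↦ polar Φ e₀ w * t + Φ w * t²` is nonnegative, so its linear coefficient vanishes
  have hpolar : polar Φ e₀ w = 0 := by
    have hdisc := discrim_le_zero fun t => by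
      linarith [hmin t, hexpand t] (a := Φ w) (b := polar Φ e₀ w) (c := 0)
    simpa [discrim, sq] using hdisc
  simpa [hpolar] using hexpand 1

end QuadraticMap

namespace Matrix

theorem transpose_mulVec_dotProduct {ι κ R : Type*} [Fintype ι] [Fintype κ] [CommSemiring R]
    (A : Matrix ι κ R) (v : ι → R) (w : κ → R) : (Aᵀ *ᵥ v) ⬝ᵥ w = v ⬝ᵥ (A *ᵥ w) := by
  rw [dotProduct_comm, dotProduct_transpose_mulVec]

variable {ι : Type*} [Fintype ι] [DecidableEq ι] {Q : Matrix ι ι ℝ}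

theorem PosDef.two_mul_dotProduct_le (hQ : Q.PosDef) (v g : ι → ℝ) :
    2 * (v ⬝ᵥ g) ≤ (Q⁻¹ *ᵥ v) ⬝ᵥ v + (Q *ᵥ g) ⬝ᵥ g := by
  have hQQ : Q *ᵥ (Q⁻¹ *ᵥ v) = v := by
    rw [mulVec_mulVec, mul_nonsing_inv _ (isUnit_iff_ne_zero.mpr hQ.det_pos.ne'), one_mulVec]
  have hQt : Qᵀ = Q := hQ.1
  have hcross : (Q⁻¹ *ᵥ v) ⬝ᵥ (Q *ᵥ g) = v ⬝ᵥ g := by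
    rw [dotProduct_mulVec, ← mulVec_transpose, hQt, hQQ]
  have hsq := hQ.posSemidef.dotProduct_mulVec_nonneg (g - Q⁻¹ *ᵥ v)
  simp only [star_trivial, mulVec_sub, hQQ, dotProduct_sub, sub_dotProduct, hcross] at hsq
  rw [dotProduct_comm g (Q *ᵥ g), dotProduct_comm g v] at hsq
  linarith

end Matrix

section StateSpace

variable {N m n p q : ℕ} {F : Fin (N + 2) → Matrix (Fin m) (Fin n) ℝ}
  {C : Fin (N + 1) → Matrix (Fin m) (Fin n) ℝ} {H : Fin (N + 1) → Matrix (Fin q) (Fin n) ℝ}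
  {B : Fin (N + 2) → Matrix (Fin m) (Fin p) ℝ} {Q : Fin (N + 2) → Matrix (Fin p) (Fin p) ℝ}
  {R : Fin (N + 1) → Matrix (Fin q) (Fin q) ℝ}

variable (F C B) in
def NSubmodule : Submodule ℝ ((Fin (N + 2) → Fin n → ℝ) × (Fin (N + 2) → Fin p → ℝ)) where
  carrier := NSet F C B
  add_mem' := by
    rintro ⟨x, f⟩ ⟨x', f'⟩ ⟨hstep, hinit⟩ ⟨hstep', hinit'⟩
    refine ⟨fun k => ?_, ?_⟩
    · simp only [Prod.fst_add, Prod.snd_add, Pi.add_apply, mulVec_add, ← hstep k, ← hstep' k]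
      abel
    · simp only [Prod.fst_add, Prod.snd_add, Pi.add_apply, mulVec_add, hinit, hinit']
  zero_mem' := ⟨fun k => by simp, by simp⟩
  smul_mem' := by
    rintro t ⟨x, f⟩ ⟨hstep, hinit⟩
    refine ⟨fun k => ?_, ?_⟩
    · simp only [Prod.smul_fst, Prod.smul_snd, Pi.smul_apply, mulVec_smul, ← hstep k, smul_sub]
    · simp only [Prod.smul_fst, Prod.smul_snd, Pi.smul_apply, mulVec_smul, hinit]

variable (H) in
def residualMap :
    ((Fin (N + 2) → Fin n → ℝ) × (Fin (N + 2) → Fin p → ℝ)) →ₗ[ℝ]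
      (Fin (N + 2) → Fin p → ℝ) × (Fin (N + 1) → Fin q → ℝ) where
  toFun v := (v.2, fun k => -(H k *ᵥ v.1 k.castSucc))
  map_add' v w := by ext <;> simp [mulVec_add, add_comm]
  map_smul' t v := by ext <;> simp [mulVec_smul]

variable (Q R) in
def weightForm :
    QuadraticForm ℝ ((Fin (N + 2) → Fin p → ℝ) × (Fin (N + 1) → Fin q → ℝ)) :=
  (QuadraticMap.pi fun j => (Q j).toQuadraticForm').prod
    (QuadraticMap.pi fun k => (R k).toQuadraticForm')

theorem Jfun_eq_weightForm (y : Fin (N + 1) → Fin q → ℝ) (f : Fin (N + 2) → Fin p → ℝ)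
    (x : Fin (N + 2) → Fin n → ℝ) :
    Jfun H Q R y f x = weightForm Q R ((0, y) + residualMap H (x, f)) := by
  simp [Jfun, weightForm, residualMap, QuadraticMap.pi_apply, Matrix.toQuadraticForm',
    toLinearMap₂'_apply', dotProduct_comm, sub_eq_add_neg]

theorem Jfun_eq_Jfun_add_Jfun_zero_of_isMin {y : Fin (N + 1) → Fin q → ℝ}
    {xh : Fin (N + 2) → Fin n → ℝ} {fh : Fin (N + 2) → Fin p → ℝ}
    (hmem : (xh, fh) ∈ NSet F C B)
    (hmin : ∀ xf ∈ NSet F C B, Jfun H Q R y fh xh ≤ Jfun H Q R y xf.2 xf.1)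
    {x : Fin (N + 2) → Fin n → ℝ} {f : Fin (N + 2) → Fin p → ℝ} (hxf : (x, f) ∈ NSet F C B) :
    Jfun H Q R y f x = Jfun H Q R y fh xh + Jfun H Q R (fun _ => 0) (f - fh) (x - xh) := by
  set A := residualMap (N := N) (n := n) (p := p) H
  have hshift (v w) : (0, y) + A v + A w = (0, y) + A (v + w) := by
    rw [map_add, add_assoc]
  have hJ (v : (Fin (N + 2) → Fin n → ℝ) × (Fin (N + 2) → Fin p → ℝ)) :
      Jfun H Q R y v.2 v.1 = weightForm Q R ((0, y) + A v) :=
    Jfun_eq_weightForm y v.2 v.1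
  have hJ0 : Jfun H Q R (fun _ => 0) (f - fh) (x - xh) =
      weightForm Q R (A ((x, f) - (xh, fh))) := by
    rw [Jfun_eq_weightForm, ← Pi.zero_def, Prod.mk_zero_zero, zero_add, Prod.mk_sub_mk]
  rw [hJ0, hJ (x, f), hJ (xh, fh)]
  nth_rw 1 [← add_sub_cancel (xh, fh) (x, f), ← hshift]
  refine QuadraticMap.map_add_eq_of_forall_le_map_add_smul _ fun t => ?_
  have hmem_t : (xh, fh) + t • ((x, f) - (xh, fh)) ∈ NSubmodule F C B :=
    add_mem hmem (Submodule.smul_mem _ t (sub_mem hxf hmem))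
  rw [← map_smul, hshift, ← hJ, ← hJ]
  exact hmin _ hmem_t

theorem lfun_add (l x w : Fin (N + 2) → Fin n → ℝ) : lfun l (x + w) = lfun l x + lfun l w := by
  simp only [lfun, Pi.add_apply, dotProduct_add, Finset.sum_add_distrib]

theorem lfun_eq_sum_of_mem_NSet {l : Fin (N + 2) → Fin n → ℝ} {z : Fin (N + 2) → Fin m → ℝ}
    {u : Fin (N + 1) → Fin q → ℝ}
    (hzu : ∀ k : Fin (N + 1),
      l k.castSucc = (F k.castSucc)ᵀ *ᵥ z k.castSucc - (C k)ᵀ *ᵥ z k.succ + (H k)ᵀ *ᵥ u k)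
    (hzl : (F (Fin.last (N + 1)))ᵀ *ᵥ z (Fin.last (N + 1)) = l (Fin.last (N + 1)))
    {x : Fin (N + 2) → Fin n → ℝ} {f : Fin (N + 2) → Fin p → ℝ} (hxf : (x, f) ∈ NSet F C B) :
    lfun l x = (∑ j, z j ⬝ᵥ (B j *ᵥ f j)) + ∑ k, u k ⬝ᵥ (H k *ᵥ x k.castSucc) := by
  obtain ⟨hstep, hinit⟩ := hxf
  have hsplit : lfun l x
      = (∑ k : Fin (N + 1), (z k.castSucc ⬝ᵥ (F k.castSucc *ᵥ x k.castSucc)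
          - z k.succ ⬝ᵥ (C k *ᵥ x k.castSucc) + u k ⬝ᵥ (H k *ᵥ x k.castSucc)))
        + z (Fin.last (N + 1)) ⬝ᵥ (F (Fin.last (N + 1)) *ᵥ x (Fin.last (N + 1))) := by
    rw [lfun, Fin.sum_univ_castSucc, ← hzl, transpose_mulVec_dotProduct]
    congr 1
    refine Finset.sum_congr rfl fun k _ => ?_
    simp only [hzu k, sub_dotProduct, add_dotProduct, transpose_mulVec_dotProduct]
  have htelescope : (∑ k : Fin (N + 1), z k.castSucc ⬝ᵥ (F k.castSucc *ᵥ x k.castSucc))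
      + z (Fin.last (N + 1)) ⬝ᵥ (F (Fin.last (N + 1)) *ᵥ x (Fin.last (N + 1)))
      - ∑ k : Fin (N + 1), z k.succ ⬝ᵥ (C k *ᵥ x k.castSucc)
      = ∑ j, z j ⬝ᵥ (B j *ᵥ f j) := by
    rw [← Fin.sum_univ_castSucc (f := fun j => z j ⬝ᵥ (F j *ᵥ x j)),
      Fin.sum_univ_succ (f := fun j => z j ⬝ᵥ (F j *ᵥ x j)),
      Fin.sum_univ_succ (f := fun j => z j ⬝ᵥ (B j *ᵥ f j)), hinit, add_sub_assoc,
      ← Finset.sum_sub_distrib]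
    congr 1
    refine Finset.sum_congr rfl fun k _ => ?_
    rw [← dotProduct_sub, hstep k]
  rw [hsplit, Finset.sum_add_distrib, Finset.sum_sub_distrib]
  linarith

theorem two_mul_lfun_le (hQ : ∀ j, (Q j).PosDef) (hR : ∀ k, (R k).PosDef)
    {l : Fin (N + 2) → Fin n → ℝ} {z : Fin (N + 2) → Fin m → ℝ} {u : Fin (N + 1) → Fin q → ℝ}
    (hzu : ∀ k : Fin (N + 1),
      l k.castSucc = (F k.castSucc)ᵀ *ᵥ z k.castSucc - (C k)ᵀ *ᵥ z k.succ + (H k)ᵀ *ᵥ u k)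
    (hzl : (F (Fin.last (N + 1)))ᵀ *ᵥ z (Fin.last (N + 1)) = l (Fin.last (N + 1)))
    {x : Fin (N + 2) → Fin n → ℝ} {f : Fin (N + 2) → Fin p → ℝ} (hxf : (x, f) ∈ NSet F C B) :
    2 * lfun l x ≤ (∑ j, ((Q j)⁻¹ *ᵥ ((B j)ᵀ *ᵥ z j)) ⬝ᵥ ((B j)ᵀ *ᵥ z j)) +
      (∑ k, ((R k)⁻¹ *ᵥ u k) ⬝ᵥ u k) + Jfun H Q R (fun _ => 0) f x := by
  have hQsum := Finset.sum_le_sum fun j (_ : j ∈ Finset.univ) =>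
    (hQ j).two_mul_dotProduct_le ((B j)ᵀ *ᵥ z j) (f j)
  have hRsum := Finset.sum_le_sum fun k (_ : k ∈ Finset.univ) =>
    (hR k).two_mul_dotProduct_le (-u k) (-(H k *ᵥ x k.castSucc))
  simp only [transpose_mulVec_dotProduct, mulVec_neg, neg_dotProduct, dotProduct_neg, neg_neg,
    Finset.sum_add_distrib, ← Finset.mul_sum] at hQsum hRsum
  simp only [lfun_eq_sum_of_mem_NSet hzu hzl hxf, Jfun, zero_sub, mulVec_neg, neg_dotProduct,
    dotProduct_neg, neg_neg]
  linarith

theorem bddAbove_lfun_sublevel (hQ : ∀ j, (Q j).PosDef) (hR : ∀ k, (R k).PosDef)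
    {l : Fin (N + 2) → Fin n → ℝ} (hl : memL F C H l) (c : ℝ) :
    BddAbove {r | ∃ xf, xf ∈ NSet F C B ∧ Jfun H Q R (fun _ => 0) xf.2 xf.1 ≤ c ∧
      r = lfun l xf.1} := by
  obtain ⟨z, u, hzu, hzl⟩ := hl
  refine ⟨((∑ j, ((Q j)⁻¹ *ᵥ ((B j)ᵀ *ᵥ z j)) ⬝ᵥ ((B j)ᵀ *ᵥ z j)) +
      (∑ k, ((R k)⁻¹ *ᵥ u k) ⬝ᵥ u k) + c) / 2, ?_⟩
  rintro r ⟨⟨x, f⟩, hxf, hJ, rfl⟩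
  linarith [two_mul_lfun_le hQ hR hzu hzl hxf]

theorem image_lfun_GSet_eq_of_isMin {y : Fin (N + 1) → Fin q → ℝ}
    {xh : Fin (N + 2) → Fin n → ℝ} {fh : Fin (N + 2) → Fin p → ℝ}
    (hmem : (xh, fh) ∈ NSet F C B)
    (hmin : ∀ xf ∈ NSet F C B, Jfun H Q R y fh xh ≤ Jfun H Q R y xf.2 xf.1)
    (l : Fin (N + 2) → Fin n → ℝ) :
    lfun l '' GSet F C H B Q R y = (lfun l xh + ·) '' {r | ∃ xf, xf ∈ NSet F C B ∧
      Jfun H Q R (fun _ => 0) xf.2 xf.1 ≤ 1 - Jfun H Q R y fh xh ∧ r = lfun l xf.1} := by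
  ext v
  constructor
  · rintro ⟨x, ⟨f, hxf, hJ⟩, rfl⟩
    have hdiff : (x, f) - (xh, fh) ∈ NSubmodule F C B := sub_mem hxf hmem
    refine ⟨lfun l (x - xh), ⟨(x - xh, f - fh), hdiff, ?_, rfl⟩, ?_⟩
    · linarith [Jfun_eq_Jfun_add_Jfun_zero_of_isMin hmem hmin hxf]
    · dsimp only
      rw [← lfun_add, add_sub_cancel]
  · rintro ⟨_, ⟨⟨w, g⟩, hwg, hJ, rfl⟩, rfl⟩
    have hsum : (xh, fh) + (w, g) ∈ NSubmodule F C B := add_mem hmem hwg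
    have hJ_sum := Jfun_eq_Jfun_add_Jfun_zero_of_isMin hmem hmin hsum
    rw [add_sub_cancel_left, add_sub_cancel_left] at hJ_sum
    exact ⟨xh + w, ⟨fh + g, hsum, by linarith⟩, lfun_add l xh w⟩

end StateSpace

/-- if `({x̂_k},{f̂_k}) ∈ 𝒩` minimizes `J_y` over `𝒩` with
`Ĵ ≤ 1` and `{ℓ_k} ∈ L`, then the support function of `G_y` satisfies
`sup_{x ∈ G_y} ℓ(x) = Σ (ℓ_k, x̂_k) + sup{ℓ(x) : ({x},{f}) ∈ 𝒩, J_0 ≤ 1 - Ĵ}`. -/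
theorem stmt10 {N m n p q : ℕ}
    (F : Fin (N + 2) → Matrix (Fin m) (Fin n) ℝ)
    (C : Fin (N + 1) → Matrix (Fin m) (Fin n) ℝ)
    (H : Fin (N + 1) → Matrix (Fin q) (Fin n) ℝ)
    (B : Fin (N + 2) → Matrix (Fin m) (Fin p) ℝ)
    (Q : Fin (N + 2) → Matrix (Fin p) (Fin p) ℝ)
    (R : Fin (N + 1) → Matrix (Fin q) (Fin q) ℝ)
    (y : Fin (N + 1) → Fin q → ℝ)
    (hQ : ∀ j, (Q j).PosDef) (hR : ∀ k, (R k).PosDef)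
    (xh : Fin (N + 2) → Fin n → ℝ) (fh : Fin (N + 2) → Fin p → ℝ)
    (hmem : (xh, fh) ∈ NSet F C B)
    (hmin : ∀ xf ∈ NSet F C B, Jfun H Q R y fh xh ≤ Jfun H Q R y xf.2 xf.1)
    (hJle : Jfun H Q R y fh xh ≤ 1)
    (l : Fin (N + 2) → Fin n → ℝ) (hl : memL F C H l) :
    sSup (lfun l '' GSet F C H B Q R y) =
      (∑ k : Fin (N + 2), l k ⬝ᵥ xh k) +
        sSup {r | ∃ xf, xf ∈ NSet F C B ∧
          Jfun H Q R (fun _ => 0) xf.2 xf.1 ≤ 1 - Jfun H Q R y fh xh ∧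
          r = lfun l xf.1} := by
  have hne : {r | ∃ xf, xf ∈ NSet F C B ∧
      Jfun H Q R (fun _ => 0) xf.2 xf.1 ≤ 1 - Jfun H Q R y fh xh ∧ r = lfun l xf.1}.Nonempty :=
    ⟨0, 0, zero_mem (NSubmodule F C B), by simpa [Jfun] using hJle, by simp [lfun]⟩
  rw [image_lfun_GSet_eq_of_isMin hmem hmin l]
  exact ((OrderIso.addLeft (lfun l xh)).map_csSup' hne (bddAbove_lfun_sublevel hQ hR hl _)).symm
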